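/- arXiv:math/0206102 — 5 statements merged into one kernel-verified Lean document; each statement's English description precedes it below -/
import Mathlib

section
/- The 3-dimensional Heisenberg Lie algebra, with basis e₁,e₂,e₃ and brackets [e₁,e₂]=e₃, [e₃,e₁]=[e₃,e₂]=0, admits a nondegenerate symmetric bilinear form a making it a pseudo-Riemannian Lie algebra. -/
/-- The Heisenberg bracket on `ℝ³`: `[e₁,e₂] = e₃` and all other basis brackets zero. -/
def heisBr (u v : Fin 3 → ℝ) : Fin 3 → ℝ := ![0, 0, u 0 * v 1 - u 1 * v 0]

/-- The metric: `a(u,v) = u₀v₂ + u₁v₁ + u₂v₀`. -/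
def heisForm : LinearMap.BilinForm ℝ (Fin 3 → ℝ) :=
  LinearMap.mk₂ ℝ (fun u v => u 0 * v 2 + u 1 * v 1 + u 2 * v 0)
    (by intros; simp [Pi.add_apply]; ring)
    (by intros; simp [Pi.smul_apply]; ring)
    (by intros; simp [Pi.add_apply]; ring)
    (by intros; simp [Pi.smul_apply]; ring)

@[simp] lemma heisForm_apply (u v : Fin 3 → ℝ) :
    heisForm u v = u 0 * v 2 + u 1 * v 1 + u 2 * v 0 := rfl

/-- The 3-dimensional Heisenberg Lie algebra admits a pseudo-Riemannian Lie algebra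
structure. -/
theorem stmt_4 :
    ∃ a : LinearMap.BilinForm ℝ (Fin 3 → ℝ),
      (∀ u v, a u v = a v u) ∧
      (∀ u, (∀ w, a u w = 0) → u = 0) ∧
      ∃ A : (Fin 3 → ℝ) → (Fin 3 → ℝ) → (Fin 3 → ℝ),
        (∀ u v w, 2 * a (A u v) w
          = a (heisBr u v) w + a (heisBr w u) v + a (heisBr w v) u) ∧
        (∀ u v w, heisBr (A u v) w + heisBr u (A w v) = 0) := by
  refine ⟨heisForm, fun u v => by simp; ring, ?_,
    fun u v => ![0, -(u 0 * v 0), u 0 * v 1], ?_, ?_⟩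
  · intro u h
    have h0 := h ![1, 0, 0]
    have h1 := h ![0, 1, 0]
    have h2 := h ![0, 0, 1]
    simp at h0 h1 h2
    funext i
    fin_cases i <;> simp [h0, h1, h2]
  · intro u v w
    simp [heisBr]
    ring
  · intro u v w
    funext i
    fin_cases i <;> simp [heisBr] <;> ring
end

section
/- The 3-dimensional Heisenberg Lie algebra admits no Riemann-Lie algebra structure: there is no positive definite symmetric bilinear form a on the Heisenberg Lie algebra such that the associated map A satisfies [A_u v, w] + [u, A_w v] = 0 for all u,v,w. -/
/-- The Heisenberg Lie algebra admits no Riemann-Lie algebra structure. -/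
theorem stmt_5 :
    ¬ ∃ a : LinearMap.BilinForm ℝ (Fin 3 → ℝ),
      (∀ u v, a u v = a v u) ∧
      (∀ u, u ≠ 0 → 0 < a u u) ∧
      ∃ A : (Fin 3 → ℝ) → (Fin 3 → ℝ) → (Fin 3 → ℝ),
        (∀ u v w, 2 * a (A u v) w
          = a (heisBr u v) w + a (heisBr w u) v + a (heisBr w v) u) ∧
        (∀ u v w, heisBr (A u v) w + heisBr u (A w v) = 0) := by
  rintro ⟨a, hsym, hpos, A, hA, hflat⟩
  set e1 : Fin 3 → ℝ := ![1, 0, 0] with he1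
  set e3 : Fin 3 → ℝ := ![0, 0, 1] with he3
  set x : Fin 3 → ℝ := A e3 e1 with hx
  -- brackets
  have hb31 : heisBr e3 e1 = 0 := by
    funext i; fin_cases i <;> simp [heisBr, he1, he3]
  have hbw3 : ∀ w : Fin 3 → ℝ, heisBr w e3 = 0 := by
    intro w; funext i; fin_cases i <;> simp [heisBr, he3]
  have hbw1 : ∀ w : Fin 3 → ℝ, heisBr w e1 = (-(w 1)) • e3 := by
    intro w; funext i; fin_cases i <;> simp [heisBr, he1, he3]
  -- key value of a on x
  have hkey : ∀ w : Fin 3 → ℝ, 2 * a x w = -(w 1) * a e3 e3 := by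
    intro w
    have h := hA e3 e1 w
    rw [hb31, hbw3, hbw1] at h
    simpa [map_smul, mul_comm] using h
  -- flatness at (e1, e1, e3) :  x 1 = 0
  have hx1 : x 1 = 0 := by
    have h := hflat e1 e1 e3
    have h2 := congrFun h 2
    have h3 : heisBr (A e1 e1) e3 = 0 := hbw3 _
    rw [h3] at h2
    simpa [heisBr, he1, he3, hx] using h2
  -- a x x = 0, hence x = 0
  have haxx : a x x = 0 := by
    have := hkey x
    rw [hx1] at this
    linarith
  have hx0 : x = 0 := by
    by_contra h
    exact absurd haxx (ne_of_gt (hpos x h))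
  -- evaluate hkey at a vector with second coord 1, e.g. ![0,1,0]
  have hg : a e3 e3 = 0 := by
    have := hkey ![0, 1, 0]
    rw [hx0] at this
    simp at this
    linarith [this]
  have he3ne : e3 ≠ 0 := by
    intro h
    have := congrFun h 2
    simp [he3] at this
  exact absurd hg (ne_of_gt (hpos e3 he3ne))
end

section
/- Every Riemann-Lie algebra is unimodular: if 𝔤 is a real Lie algebra with a positive definite symmetric bilinear form a such that the associated map A satisfies [A_u v, w] + [u, A_w v] = 0 for all u,v,w, then trace(ad_u) = 0 for every u ∈ 𝔤. -/
/-!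
Let `z` represent the linear form `u ↦ tr (ad u)` through `a`, and let `J u = A u z`. Since
`tr (ad ⁅u, v⁆) = 0`, torsion-freeness `A u v - A v u = ⁅u, v⁆` makes `J` self-adjoint, and as
`A z` is skew-adjoint this forces `A z z = 0`. The Riemann-Lie condition at `(z, z, w)` then
says `ad z ∘ J = 0`. Writing `ad z = A z - J` gives `tr (J ∘ J) = tr (A z ∘ J) = 0`, so `J = 0`,
and finally `a z z = tr (ad z) = tr (A z) = 0`.
-/

open LinearMap (BilinForm IsSkewAdjoint trace)

namespace LinearMap.BilinForm

variable {M : Type*} [AddCommGroup M] [Module ℝ M] {a : BilinForm ℝ M}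

theorem nondegenerate_of_pos (hpos : ∀ u, u ≠ 0 → 0 < a u u) : a.Nondegenerate := by
  refine ⟨fun x hx => ?_, fun y hy => ?_⟩ <;> by_contra h
  · exact (hpos x h).ne' (hx x)
  · exact (hpos y h).ne' (hy y)

theorem Nondegenerate.eq_of_forall_apply_eq (hnd : a.Nondegenerate) {x y : M}
    (h : ∀ w, a x w = a y w) : x = y :=
  sub_eq_zero.mp <| hnd.1 _ fun w => by rw [map_sub, LinearMap.sub_apply, h, sub_self]

theorem apply_self_nonneg (hpos : ∀ u, u ≠ 0 → 0 < a u u) (x : M) : 0 ≤ a x x := by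
  rcases eq_or_ne x 0 with rfl | hx
  · simp
  · exact (hpos x hx).le

variable [FiniteDimensional ℝ M]

theorem exists_basis_trace_eq_sum (hsymm : ∀ u v, a u v = a v u)
    (hpos : ∀ u, u ≠ 0 → 0 < a u u) :
    ∃ (n : ℕ) (b : Module.Basis (Fin n) ℝ M), ∀ T : Module.End ℝ M,
      trace ℝ M T = ∑ i, a (b i) (T (b i)) := by
  let core : InnerProductSpace.Core ℝ M :=
    { inner := fun x y => a x y
      conj_inner_symm := fun x y => hsymm y x
      re_inner_nonneg := apply_self_nonneg hpos
      add_left := fun x y w => by simp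
      smul_left := fun x y r => by simp
      definite := fun x hx => by_contra fun h => (hpos x h).ne' hx }
  let : NormedAddCommGroup M := core.toNormedAddCommGroup
  let : InnerProductSpace ℝ M := .ofCore core.toCore
  let b := stdOrthonormalBasis ℝ M
  exact ⟨_, b.toBasis, fun T => by rw [T.trace_eq_sum_inner b, b.coe_toBasis]; rfl⟩

theorem trace_eq_zero_of_isSkewAdjoint (hsymm : ∀ u v, a u v = a v u)
    (hpos : ∀ u, u ≠ 0 → 0 < a u u) {S : Module.End ℝ M} (hS : IsSkewAdjoint a S) :
    trace ℝ M S = 0 := by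
  obtain ⟨n, b, htr⟩ := exists_basis_trace_eq_sum hsymm hpos
  rw [htr]
  refine Finset.sum_eq_zero fun i _ => ?_
  have h := hS (b i) (b i)
  rw [Pi.neg_apply, map_neg, hsymm] at h
  linarith

theorem trace_comp_eq_zero_of_isSkewAdjoint_of_isSelfAdjoint (hsymm : ∀ u v, a u v = a v u)
    (hpos : ∀ u, u ≠ 0 → 0 < a u u) {S J : Module.End ℝ M} (hS : IsSkewAdjoint a S)
    (hJ : a.IsSelfAdjoint J) : trace ℝ M (S ∘ₗ J) = 0 := by
  obtain ⟨n, b, htr⟩ := exists_basis_trace_eq_sum hsymm hpos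
  have hswap : trace ℝ M (S ∘ₗ J) = -trace ℝ M (J ∘ₗ S) := by
    rw [htr, htr, ← Finset.sum_neg_distrib]
    refine Finset.sum_congr rfl fun i _ => ?_
    rw [LinearMap.comp_apply, LinearMap.comp_apply, hsymm, hS, Pi.neg_apply, map_neg, hJ]
  linarith [trace_comp_comm' S J]

theorem eq_zero_of_isSelfAdjoint_of_trace_comp_self (hsymm : ∀ u v, a u v = a v u)
    (hpos : ∀ u, u ≠ 0 → 0 < a u u) {J : Module.End ℝ M} (hJ : a.IsSelfAdjoint J)
    (htrJJ : trace ℝ M (J ∘ₗ J) = 0) : J = 0 := by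
  obtain ⟨n, b, htr⟩ := exists_basis_trace_eq_sum hsymm hpos
  have hsum : ∑ i, a (J (b i)) (J (b i)) = 0 := by
    rw [← htrJJ, htr]
    exact Finset.sum_congr rfl fun i _ => hJ _ _
  refine b.ext fun i => by_contra fun h => (hpos _ h).ne' ?_
  exact (Finset.sum_eq_zero_iff_of_nonneg fun i _ => apply_self_nonneg hpos _).mp hsum i (Finset.mem_univ i)

end LinearMap.BilinForm

attribute [local instance] LieRing.ofAssociativeRing in
theorem LieAlgebra.trace_ad_lie {R L : Type*} [CommRing R] [LieRing L] [LieAlgebra R L] (x y : L) :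
    trace R L (ad R L ⁅x, y⁆) = 0 := by
  rw [LieHom.map_lie, LinearMap.trace_lie]

section LeviCivita

open LinearMap.BilinForm

variable {G : Type*} [LieRing G] [LieAlgebra ℝ G] {a : BilinForm ℝ G} {A : G → G → G}

/-- The Koszul formula: `A u v` is `∇_u v` for the left-invariant metric `a`. -/
def IsLeviCivitaProduct (a : BilinForm ℝ G) (A : G → G → G) : Prop :=
  ∀ u v w, 2 * a (A u v) w = a ⁅u, v⁆ w + a ⁅w, u⁆ v + a ⁅w, v⁆ u

namespace IsLeviCivitaProduct

theorem apply_swap (hA : IsLeviCivitaProduct a A) (u v w : G) : a (A u v) w = -a (A u w) v := by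
  have h₁ := hA u v w
  have h₂ := hA u w v
  rw [← lie_skew u w, ← lie_skew v u, ← lie_skew v w] at h₂
  simp only [map_neg, LinearMap.neg_apply] at h₂
  linarith

theorem isSkewAdjoint (hsymm : ∀ u v, a u v = a v u) (hA : IsLeviCivitaProduct a A) (u : G) :
    IsSkewAdjoint a (A u) := fun v w => by
  rw [Pi.neg_apply, map_neg, hsymm v, hA.apply_swap]

theorem sub_swap (hA : IsLeviCivitaProduct a A) (hnd : a.Nondegenerate) (u v : G) :
    A u v - A v u = ⁅u, v⁆ := by
  refine hnd.eq_of_forall_apply_eq fun w => ?_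
  have h₁ := hA u v w
  have h₂ := hA v u w
  rw [← lie_skew v u] at h₂
  simp only [map_sub, map_neg, LinearMap.sub_apply, LinearMap.neg_apply] at h₂ ⊢
  linarith

def leftMul (hA : IsLeviCivitaProduct a A) (hnd : a.Nondegenerate) (u : G) : G →ₗ[ℝ] G where
  toFun := A u
  map_add' x y := hnd.eq_of_forall_apply_eq fun w => by
    have := hA u (x + y) w
    simp only [lie_add, map_add, LinearMap.add_apply] at this ⊢
    linarith [hA u x w, hA u y w]
  map_smul' c x := hnd.eq_of_forall_apply_eq fun w => by
    have := hA u (c • x) w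
    simp only [lie_smul, map_smul, LinearMap.smul_apply, smul_eq_mul,
      RingHom.id_apply] at this ⊢
    linear_combination this / 2 - c / 2 * hA u x w

@[simp]
theorem leftMul_apply (hA : IsLeviCivitaProduct a A) (hnd : a.Nondegenerate) (u v : G) :
    hA.leftMul hnd u v = A u v :=
  rfl

def rightMul (hA : IsLeviCivitaProduct a A) (hnd : a.Nondegenerate) (v : G) : G →ₗ[ℝ] G :=
  hA.leftMul hnd v - LieAlgebra.ad ℝ G v

@[simp]
theorem rightMul_apply (hA : IsLeviCivitaProduct a A) (hnd : a.Nondegenerate) (u v : G) :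
    hA.rightMul hnd v u = A u v := by
  rw [rightMul, LinearMap.sub_apply, leftMul_apply, LieAlgebra.ad_apply, ← hA.sub_swap hnd,
    sub_sub_cancel]

variable {z : G}

theorem isSelfAdjoint_rightMul (hsymm : ∀ u v, a u v = a v u) (hA : IsLeviCivitaProduct a A)
    (hnd : a.Nondegenerate) (hz : ∀ u, a z u = trace ℝ G (LieAlgebra.ad ℝ G u)) :
    a.IsSelfAdjoint (hA.rightMul hnd z) := fun x y => by
  have htr : a ⁅x, y⁆ z = 0 := by
    rw [hsymm, hz, LieAlgebra.trace_ad_lie]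
  rw [rightMul_apply, rightMul_apply]
  calc a (A x z) y = -a (A x y) z := hA.apply_swap x z y
    _ = -a (A y x + ⁅x, y⁆) z := by rw [← hA.sub_swap hnd, add_sub_cancel]
    _ = a x (A y z) := by
      rw [map_add, LinearMap.add_apply, htr, add_zero, hA.apply_swap, neg_neg, hsymm]

theorem apply_self_eq_zero (hsymm : ∀ u v, a u v = a v u) (hA : IsLeviCivitaProduct a A)
    (hnd : a.Nondegenerate) (hz : ∀ u, a z u = trace ℝ G (LieAlgebra.ad ℝ G u)) :
    A z z = 0 := by
  refine hnd.eq_of_forall_apply_eq fun w => ?_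
  have hJ := hA.isSelfAdjoint_rightMul hsymm hnd hz z w
  rw [rightMul_apply, rightMul_apply] at hJ
  have hskew := hA.apply_swap w z z
  rw [hJ, map_zero, LinearMap.zero_apply, hsymm]
  linarith

theorem eq_zero_of_forall_apply_eq_trace_ad [FiniteDimensional ℝ G]
    (hsymm : ∀ u v, a u v = a v u) (hpos : ∀ u, u ≠ 0 → 0 < a u u) (hA : IsLeviCivitaProduct a A)
    (hz : ∀ u, a z u = trace ℝ G (LieAlgebra.ad ℝ G u))
    (hcompat : ∀ w, ⁅A z z, w⁆ + ⁅z, A w z⁆ = 0) : z = 0 := by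
  have hnd := nondegenerate_of_pos hpos
  set S := hA.leftMul hnd z
  set J := hA.rightMul hnd z
  have hS : IsSkewAdjoint a S := hA.isSkewAdjoint hsymm z
  have hJ : a.IsSelfAdjoint J := hA.isSelfAdjoint_rightMul hsymm hnd hz
  have had : LieAlgebra.ad ℝ G z = S - J := (sub_sub_cancel _ _).symm
  have hadJ : (S - J) ∘ₗ J = 0 := by
    ext w
    rw [LinearMap.comp_apply, ← had, LieAlgebra.ad_apply, rightMul_apply, LinearMap.zero_apply,
      ← hcompat w, hA.apply_self_eq_zero hsymm hnd hz, zero_lie, zero_add]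
  have hJ0 : J = 0 := by
    refine eq_zero_of_isSelfAdjoint_of_trace_comp_self hsymm hpos hJ ?_
    have := congrArg (trace ℝ G) hadJ
    rw [LinearMap.sub_comp, map_sub, map_zero,
      trace_comp_eq_zero_of_isSkewAdjoint_of_isSelfAdjoint hsymm hpos hS hJ] at this
    linarith
  by_contra hz0
  refine (hpos z hz0).ne' ?_
  rw [hz, had, hJ0, sub_zero, trace_eq_zero_of_isSkewAdjoint hsymm hpos hS]

end IsLeviCivitaProduct

end LeviCivita

/-- Every Riemann-Lie algebra is unimodular: `trace (ad u) = 0` for all `u`. -/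
theorem stmt_8 (G : Type*) [LieRing G] [LieAlgebra ℝ G] [FiniteDimensional ℝ G]
    (a : LinearMap.BilinForm ℝ G)
    (hsymm : ∀ u v : G, a u v = a v u)
    (hpos : ∀ u : G, u ≠ 0 → 0 < a u u)
    (A : G → G → G)
    (hA : ∀ u v w : G, 2 * a (A u v) w = a ⁅u, v⁆ w + a ⁅w, u⁆ v + a ⁅w, v⁆ u)
    (hcompat : ∀ u v w : G, ⁅A u v, w⁆ + ⁅u, A w v⁆ = 0) :
    ∀ u : G, LinearMap.trace ℝ G (LieAlgebra.ad ℝ G u) = 0 := by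
  let trAd : Module.Dual ℝ G := (trace ℝ G).comp (LieAlgebra.ad ℝ G : G →ₗ[ℝ] Module.End ℝ G)
  let z := (a.toDual (LinearMap.BilinForm.nondegenerate_of_pos hpos)).symm trAd
  have hz : ∀ u, a z u = trace ℝ G (LieAlgebra.ad ℝ G u) :=
    LinearMap.BilinForm.apply_toDual_symm_apply trAd
  have hz0 : z = 0 :=
    IsLeviCivitaProduct.eq_zero_of_forall_apply_eq_trace_ad hsymm hpos hA hz (hcompat z z)
  intro u
  rw [← hz, hz0, map_zero, LinearMap.zero_apply]
end

section
/- Every 2-dimensional Riemann-Lie algebra is abelian: if 𝔤 is a 2-dimensional real Lie algebra with a positive definite symmetric bilinear form a such that the associated map A satisfies [A_u v, w] + [u, A_w v] = 0 for all u,v,w, then [u,v] = 0 for all u,v ∈ 𝔤. -/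
lemma key_aux (G : Type*) [LieRing G] [LieAlgebra ℝ G] [FiniteDimensional ℝ G]
    (hdim : Module.finrank ℝ G = 2)
    (a : LinearMap.BilinForm ℝ G)
    (hsymm : ∀ u v : G, a u v = a v u)
    (hpos : ∀ u : G, u ≠ 0 → 0 < a u u)
    (A : G → G → G)
    (hA : ∀ u v w : G, 2 * a (A u v) w = a ⁅u, v⁆ w + a ⁅w, u⁆ v + a ⁅w, v⁆ u)
    (hcompat : ∀ u v w : G, ⁅A u v, w⁆ + ⁅u, A w v⁆ = 0)
    (e z : G) (hz : z ≠ 0) (hez : ⁅e, z⁆ = z) : False := by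
  have hze : ⁅z, e⁆ = -z := by rw [← lie_skew, hez]
  set p := a e e with hp
  set q := a e z with hq
  set r := a z z with hrr
  have hsym' : a z e = q := (hsymm z e).trans rfl
  have hr : 0 < r := hpos z hz
  -- e, z linearly independent
  have hind : LinearIndependent ℝ ![e, z] := by
    rw [LinearIndependent.pair_iff]
    intro s t hst
    have h1 : ⁅s • e + t • z, z⁆ = (0 : G) := by rw [hst]; simp
    simp only [add_lie, smul_lie, hez, lie_self, smul_zero, add_zero] at h1
    have hs : s = 0 := by
      rcases smul_eq_zero.mp h1 with h | h
      · exact h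
      · exact absurd h hz
    subst hs
    simp only [zero_smul, zero_add] at hst
    rcases smul_eq_zero.mp hst with h | h
    · exact ⟨rfl, h⟩
    · exact absurd h hz
  have hcard : Fintype.card (Fin 2) = Module.finrank ℝ G := by simp [hdim]
  set B := basisOfLinearIndependentOfCardEqFinrank hind hcard with hB
  have hspan : ∀ x : G, ∃ s t : ℝ, s • e + t • z = x := by
    intro x
    have hx : x ∈ Submodule.span ℝ ({e, z} : Set G) := by
      have hs := B.span_eq
      rw [hB, coe_basisOfLinearIndependentOfCardEqFinrank] at hs
      have hrange : Set.range ![e, z] = {e, z} := by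
        ext w
        simp only [Set.mem_range, Fin.exists_fin_two, Matrix.cons_val_zero, Matrix.cons_val_one, Matrix.head_cons, Set.mem_insert_iff, Set.mem_singleton_iff]
        tauto
      rw [hrange] at hs
      rw [hs]; trivial
    exact (Submodule.mem_span_pair).mp hx
  obtain ⟨x₁, x₂, hX⟩ := hspan (A z e)
  obtain ⟨y₁, y₂, hY⟩ := hspan (A e e)
  -- strict Cauchy-Schwarz
  have hcs : 0 < p * r - q ^ 2 := by
    have hnz : e - (q / r) • z ≠ 0 := by
      intro h
      have h1 : ⁅e - (q / r) • z, z⁆ = (0 : G) := by rw [h]; simp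
      simp only [sub_lie, smul_lie, lie_self, smul_zero, sub_zero, hez] at h1
      exact hz h1
    have h := hpos _ hnz
    simp only [map_sub, map_smul, LinearMap.sub_apply, LinearMap.smul_apply,
      smul_eq_mul, ← hp, ← hq, ← hrr, hsym'] at h
    have hr' : r ≠ 0 := ne_of_gt hr
    have h3 : 0 < (p * r - q ^ 2) / r := by
      have heq : p - q / r * q - (q / r * q - q / r * (q / r * r)) = (p * r - q ^ 2) / r := by
        field_simp; ring
      nlinarith [h, heq]
    have := (div_pos_iff.mp h3)
    rcases this with ⟨h4, _⟩ | ⟨_, h5⟩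
    · exact h4
    · linarith
  -- equations from hA
  have E1 : 2 * a (A z e) e = 0 := by
    have h := hA z e e
    rw [hze, hez] at h
    simp only [lie_self, map_zero, LinearMap.zero_apply, map_neg, LinearMap.neg_apply] at h
    linarith [h]
  have E2 : 2 * a (A z e) z = -(2 * r) := by
    have h := hA z e z
    rw [hze] at h
    simp only [lie_self, map_zero, LinearMap.zero_apply, map_neg, LinearMap.neg_apply,
      ← hrr, hsym'] at h
    linarith [h]
  have E3 : 2 * a (A e e) e = 0 := by
    have h := hA e e e
    simp only [lie_self, map_zero, LinearMap.zero_apply] at h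
    linarith [h]
  have E4 : 2 * a (A e e) z = -(2 * q) := by
    have h := hA e e z
    rw [hze] at h
    simp only [lie_self, map_zero, LinearMap.zero_apply, map_neg, LinearMap.neg_apply,
      ← hp, hsym'] at h
    linarith [h]
  -- expand coordinates
  have e1 : x₁ * p + x₂ * q = 0 := by
    have := E1
    rw [← hX] at this
    simp only [map_add, map_smul, LinearMap.add_apply, LinearMap.smul_apply, smul_eq_mul,
      ← hp, hsym'] at this
    linarith
  have e2 : x₁ * q + x₂ * r = -r := by
    have := E2
    rw [← hX] at this
    simp only [map_add, map_smul, LinearMap.add_apply, LinearMap.smul_apply, smul_eq_mul,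
      ← hq, ← hrr] at this
    linarith
  have e3 : y₁ * p + y₂ * q = 0 := by
    have := E3
    rw [← hY] at this
    simp only [map_add, map_smul, LinearMap.add_apply, LinearMap.smul_apply, smul_eq_mul,
      ← hp, hsym'] at this
    linarith
  have e4 : y₁ * q + y₂ * r = -q := by
    have := E4
    rw [← hY] at this
    simp only [map_add, map_smul, LinearMap.add_apply, LinearMap.smul_apply, smul_eq_mul,
      ← hq, ← hrr] at this
    linarith
  -- compatibility equation
  have e5 : x₂ + y₁ = 0 := by
    have h := hcompat z e e
    rw [← hX, ← hY] at h
    simp only [add_lie, lie_add, smul_lie, lie_smul, lie_self, smul_zero, add_zero,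
      zero_add, hze] at h
    have h' : (-(x₂ + y₁)) • z = 0 := by
      rw [← h]; module
    rcases smul_eq_zero.mp h' with h'' | h''
    · linarith [neg_eq_zero.mp h'']
    · exact absurd h'' hz
  -- derive contradiction
  have h5 : x₂ * (p * r - q ^ 2) = -(r * p) := by linear_combination p * e2 - q * e1
  have h6 : y₁ * (p * r - q ^ 2) = q ^ 2 := by linear_combination r * e3 - q * e4
  nlinarith [h5, h6, e5, hcs]

/-- Every 2-dimensional Riemann-Lie algebra is abelian. -/
theorem stmt_13 (G : Type*) [LieRing G] [LieAlgebra ℝ G] [FiniteDimensional ℝ G]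
    (hdim : Module.finrank ℝ G = 2)
    (a : LinearMap.BilinForm ℝ G)
    (hsymm : ∀ u v : G, a u v = a v u)
    (hpos : ∀ u : G, u ≠ 0 → 0 < a u u)
    (A : G → G → G)
    (hA : ∀ u v w : G, 2 * a (A u v) w = a ⁅u, v⁆ w + a ⁅w, u⁆ v + a ⁅w, v⁆ u)
    (hcompat : ∀ u v w : G, ⁅A u v, w⁆ + ⁅u, A w v⁆ = 0) :
    ∀ u v : G, ⁅u, v⁆ = 0 := by
  by_contra hcon
  push_neg at hcon
  obtain ⟨u, v, huv⟩ := hcon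
  obtain ⟨z, hzdef⟩ : ∃ z : G, z = ⁅u, v⁆ := ⟨_, rfl⟩
  have hz : z ≠ 0 := by rw [hzdef]; exact huv
  -- u, v linearly independent
  have hind : LinearIndependent ℝ ![u, v] := by
    rw [LinearIndependent.pair_iff]
    intro s t hst
    have h1 : ⁅s • u + t • v, v⁆ = (0 : G) := by rw [hst]; simp
    simp only [add_lie, smul_lie, lie_self, smul_zero, add_zero] at h1
    have hs : s = 0 := by
      rcases smul_eq_zero.mp h1 with h | h
      · exact h
      · exact absurd h huv
    subst hs
    simp only [zero_smul, zero_add] at hst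
    rcases smul_eq_zero.mp hst with h | h
    · exact ⟨rfl, h⟩
    · exfalso; apply huv; rw [h]; simp
  have hcard : Fintype.card (Fin 2) = Module.finrank ℝ G := by simp [hdim]
  set B := basisOfLinearIndependentOfCardEqFinrank hind hcard with hB
  have hzmem : z ∈ Submodule.span ℝ ({u, v} : Set G) := by
    have hs := B.span_eq
    rw [hB, coe_basisOfLinearIndependentOfCardEqFinrank] at hs
    have hrange : Set.range ![u, v] = {u, v} := by
      ext w
      simp only [Set.mem_range, Fin.exists_fin_two, Matrix.cons_val_zero, Matrix.cons_val_one,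
        Matrix.head_cons, Set.mem_insert_iff, Set.mem_singleton_iff]
      tauto
    rw [hrange] at hs
    rw [hs]; trivial
  obtain ⟨s, t, hst⟩ := (Submodule.mem_span_pair).mp hzmem
  -- brackets with z
  have huz : ⁅u, z⁆ = t • z := by
    conv_lhs => rw [← hst]
    simp only [lie_add, lie_smul, lie_self, smul_zero, zero_add]
    rw [← hzdef]
  have hvz : ⁅v, z⁆ = -(s • z) := by
    conv_lhs => rw [← hst]
    simp only [lie_add, lie_smul, lie_self, smul_zero, add_zero]
    rw [← lie_skew, ← hzdef, smul_neg]
  rcases eq_or_ne t 0 with ht | ht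
  · -- then s ≠ 0, use e := -s⁻¹ • v
    have hs : s ≠ 0 := by
      intro hs0
      apply hz
      rw [← hst, hs0, ht]; simp
    refine key_aux G hdim a hsymm hpos A hA hcompat (-s⁻¹ • v) z hz ?_
    rw [smul_lie, hvz, smul_neg, smul_smul]
    simp [inv_mul_cancel₀ hs]
  · refine key_aux G hdim a hsymm hpos A hA hcompat (t⁻¹ • u) z hz ?_
    rw [smul_lie, huz, smul_smul, inv_mul_cancel₀ ht, one_smul]
end

section
/- If (𝔤,[,],a) is a pseudo-Riemannian Lie algebra and the form a is definite (positive or negative definite), and 𝔤 is 3-dimensional and nilpotent nonabelian (hence isomorphic to the Heisenberg algebra), a contradiction arises; equivalently, no 3-dimensional nonabelian nilpotent Lie algebra admits a compatible definite form. -/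
/-!
A nonabelian nilpotent Lie algebra has a nonzero central element `z` in its derived algebra.
Compatibility of the Levi-Civita product `A` with the bracket, applied with `u = z`, shows that
every `A z v` is central; the Koszul formula for `A z v` tested against a central vector then gives
`a (A z v) (A z v) = 0`, so `A z v = 0` by anisotropy. The Koszul formula for `A z v` now says
that `z` is orthogonal to every bracket, hence to the derived algebra, and in particular
`a z z = 0`, contradicting anisotropy.
-/

namespace LieModule

variable {R L M : Type*} [CommRing R] [LieRing L] [LieAlgebra R L] [AddCommGroup M] [Module R M]
  [LieRingModule L M] [LieModule R L M]

theorem exists_ne_zero_mem_lowerCentralSeries_one_inf_maxTrivSubmodule [IsNilpotent L M]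
    (h : ¬ IsTrivial L M) :
    ∃ z ∈ lowerCentralSeries R L M 1 ⊓ maxTrivSubmodule R L M, z ≠ 0 := by
  rw [← disjoint_lowerCentralSeries_maxTrivSubmodule_iff R, disjoint_iff,
    ← LieSubmodule.toSubmodule_eq_bot] at h
  exact Submodule.exists_mem_ne_zero_of_ne_bot h

end LieModule

namespace LieAlgebra

variable {R L : Type*} [CommRing R] [LieRing L] [LieAlgebra R L]

def IsLeviCivitaProduct (a : LinearMap.BilinForm R L) (A : L → L → L) : Prop :=
  ∀ u v w : L, 2 * a (A u v) w = a ⁅u, v⁆ w + a ⁅w, u⁆ v + a ⁅w, v⁆ u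

theorem form_eq_zero_of_mem_lowerCentralSeries_one (a : LinearMap.BilinForm R L) {z : L}
    (hz : ∀ u w : L, a ⁅w, u⁆ z = 0) {m : L} (hm : m ∈ LieModule.lowerCentralSeries R L L 1) :
    a m z = 0 := by
  rw [LieModule.lowerCentralSeries_succ, LieModule.lowerCentralSeries_zero,
    ← LieSubmodule.mem_toSubmodule, LieSubmodule.lieIdeal_oper_eq_linear_span'] at hm
  suffices h : Submodule.span R _ ≤ LinearMap.ker (a.flip z) from h hm
  rw [Submodule.span_le]
  rintro _ ⟨w, -, u, -, rfl⟩
  exact hz u w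

variable [NoZeroDivisors R] [NeZero (2 : R)] {a : LinearMap.BilinForm R L} {A : L → L → L}

theorem IsLeviCivitaProduct.eq_zero_of_mem_maxTrivSubmodule
    (hA : IsLeviCivitaProduct a A) (ha : a.toQuadraticMap.Anisotropic)
    (hcompat : ∀ u v w : L, ⁅A u v, w⁆ + ⁅u, A w v⁆ = 0)
    {z : L} (hz : z ∈ LieModule.maxTrivSubmodule R L L) (v : L) :
    A z v = 0 := by
  rw [LieModule.mem_maxTrivSubmodule] at hz
  have hz' : ∀ w : L, ⁅z, w⁆ = 0 := fun w => by rw [← lie_skew, hz, neg_zero]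
  have hcentral : ∀ w : L, ⁅A z v, w⁆ = 0 := fun w => by simpa [hz'] using hcompat z v w
  have h := hA z v (A z v)
  simp only [hz', hcentral, map_zero, LinearMap.zero_apply, add_zero] at h
  exact ha _ ((mul_eq_zero.mp h).resolve_left two_ne_zero)

theorem IsLeviCivitaProduct.form_lie_eq_zero_of_mem_maxTrivSubmodule
    (hA : IsLeviCivitaProduct a A) (ha : a.toQuadraticMap.Anisotropic)
    (hcompat : ∀ u v w : L, ⁅A u v, w⁆ + ⁅u, A w v⁆ = 0)
    {z : L} (hz : z ∈ LieModule.maxTrivSubmodule R L L) (u w : L) :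
    a ⁅w, u⁆ z = 0 := by
  have h := hA z u w
  rw [hA.eq_zero_of_mem_maxTrivSubmodule ha hcompat hz u] at h
  rw [LieModule.mem_maxTrivSubmodule] at hz
  rw [hz, ← lie_skew, hz] at h
  simpa using h.symm

theorem IsLeviCivitaProduct.isTrivial_of_isNilpotent [LieRing.IsNilpotent L]
    (hA : IsLeviCivitaProduct a A) (ha : a.toQuadraticMap.Anisotropic)
    (hcompat : ∀ u v w : L, ⁅A u v, w⁆ + ⁅u, A w v⁆ = 0) :
    LieModule.IsTrivial L L := by
  by_contra hL
  obtain ⟨z, ⟨hz_derived, hz_central⟩, hz⟩ :=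
    LieModule.exists_ne_zero_mem_lowerCentralSeries_one_inf_maxTrivSubmodule (R := R) hL
  exact hz <| ha z <| form_eq_zero_of_mem_lowerCentralSeries_one a
    (hA.form_lie_eq_zero_of_mem_maxTrivSubmodule ha hcompat hz_central) hz_derived

end LieAlgebra

theorem stmt_16_general (G : Type*) [LieRing G] [LieAlgebra ℝ G]
    (hnilp : LieRing.IsNilpotent G)
    (hnonab : ¬ ∀ u v : G, ⁅u, v⁆ = 0)
    (a : LinearMap.BilinForm ℝ G)
    (hdef : (∀ u : G, u ≠ 0 → 0 < a u u) ∨ (∀ u : G, u ≠ 0 → a u u < 0))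
    (A : G → G → G)
    (hA : ∀ u v w : G, 2 * a (A u v) w = a ⁅u, v⁆ w + a ⁅w, u⁆ v + a ⁅w, v⁆ u)
    (hcompat : ∀ u v w : G, ⁅A u v, w⁆ + ⁅u, A w v⁆ = 0) :
    False := by
  have ha : a.toQuadraticMap.Anisotropic := fun u hu => by
    by_contra hu0
    rcases hdef with hpos | hneg
    · exact (hpos u hu0).ne' hu
    · exact (hneg u hu0).ne hu
  exact hnonab (LieAlgebra.IsLeviCivitaProduct.isTrivial_of_isNilpotent hA ha hcompat).trivial

/-- No 3-dimensional nonabelian nilpotent real Lie algebra admits a compatible definite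
form making it a pseudo-Riemannian Lie algebra. -/
theorem stmt_16 (G : Type*) [LieRing G] [LieAlgebra ℝ G] [FiniteDimensional ℝ G]
    (hdim : Module.finrank ℝ G = 3)
    (hnilp : LieRing.IsNilpotent G)
    (hnonab : ¬ ∀ u v : G, ⁅u, v⁆ = 0)
    (a : LinearMap.BilinForm ℝ G)
    (hsymm : ∀ u v : G, a u v = a v u)
    (hdef : (∀ u : G, u ≠ 0 → 0 < a u u) ∨ (∀ u : G, u ≠ 0 → a u u < 0))
    (A : G → G → G)
    (hA : ∀ u v w : G, 2 * a (A u v) w = a ⁅u, v⁆ w + a ⁅w, u⁆ v + a ⁅w, v⁆ u)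
    (hcompat : ∀ u v w : G, ⁅A u v, w⁆ + ⁅u, A w v⁆ = 0) :
    False :=
  stmt_16_general G hnilp hnonab a hdef A hA hcompat
end
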